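/- Let G be a torsion-free group containing no subgroup isomorphic to ℤ × ℤ. Then for any commuting elements g, h ∈ G, the Pontryagin product g ∧ h vanishes in H₂(G; ℤ). -/

import Mathlib

/-!
Commuting `g, h` give a homomorphism `ℤ × ℤ → G`, `(m, n) ↦ g ^ m * h ^ n`. It cannot be
injective, so `g ^ m = h ^ n` for some `(m, n) ≠ 0`. Torsion-freeness lets us divide `(m, n)` by
its gcd, and a Bézout relation for the coprime quotients produces `c` with `g, h ∈ ⟨c⟩`. Finally
`∧` is additive in each variable (the defects are explicit bar boundaries) and alternating, so
`c ^ i ∧ c ^ j = i j (c ∧ c) = 0`.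
-/

open Finsupp

/-- Degree-2 differential of the (inhomogeneous) bar complex of `G` with
coefficients in `k`: `[a|b] ↦ [b] - [ab] + [a]`. -/
noncomputable def barD2 (k : Type) [Ring k] (G : Type) [Group G] :
    ((G × G) →₀ k) →ₗ[k] (G →₀ k) :=
  Finsupp.lift _ k _ fun p => single p.2 1 - single (p.1 * p.2) 1 + single p.1 1

/-- Degree-3 differential of the bar complex:
`[a|b|c] ↦ [b|c] - [ab|c] + [a|bc] - [a|b]`. -/
noncomputable def barD3 (k : Type) [Ring k] (G : Type) [Group G] :
    ((G × G × G) →₀ k) →ₗ[k] ((G × G) →₀ k) :=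
  Finsupp.lift _ k _ fun t =>
    single (t.2.1, t.2.2) 1 - single (t.1 * t.2.1, t.2.2) 1
      + single (t.1, t.2.1 * t.2.2) 1 - single (t.1, t.2.1) 1

/-- The second group homology `H₂(G; k)`: 2-cycles modulo 2-boundaries of the
bar complex of `G` with coefficients in `k`. -/
noncomputable abbrev groupH2 (k : Type) [Ring k] (G : Type) [Group G] : Type :=
  (barD2 k G).toAddMonoidHom.ker ⧸
    (((barD3 k G).toAddMonoidHom.range).comap (barD2 k G).toAddMonoidHom.ker.subtype)

theorem wedge_cycle {k : Type} [Ring k] {G : Type} [Group G] (g h : G)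
    (hc : g * h = h * g) :
    single (g, h) (1 : k) - single (h, g) 1 ∈ (barD2 k G).toAddMonoidHom.ker := by
  rw [AddMonoidHom.mem_ker, LinearMap.toAddMonoidHom_coe, map_sub]
  simp only [barD2, Finsupp.lift_apply, sum_single_index, one_smul, zero_smul, hc]
  abel

/-- The Pontryagin product `g ∧ h ∈ H₂(G; k)` of commuting elements `g, h` of
`G`, i.e. the homology class of the bar 2-cycle `[g|h] - [h|g]`. -/
noncomputable def wedgeClass (k : Type) [Ring k] {G : Type} [Group G]
    (g h : G) (hc : g * h = h * g) : groupH2 k G :=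
  QuotientAddGroup.mk ⟨single (g, h) 1 - single (h, g) 1, wedge_cycle g h hc⟩

section maps

variable (k : Type) [Ring k] {G H : Type} [Group G] [Group H] (f : G →* H)

noncomputable def barC1Map : (G →₀ k) →ₗ[k] (H →₀ k) := Finsupp.lmapDomain k k f

noncomputable def barC2Map : ((G × G) →₀ k) →ₗ[k] ((H × H) →₀ k) :=
  Finsupp.lmapDomain k k (Prod.map f f)

noncomputable def barC3Map : ((G × G × G) →₀ k) →ₗ[k] ((H × H × H) →₀ k) :=
  Finsupp.lmapDomain k k (Prod.map f (Prod.map f f))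

theorem mapDomain_sub' {k : Type} [Ring k] {α β : Type} (f : α → β)
    (x y : α →₀ k) : mapDomain f (x - y) = mapDomain f x - mapDomain f y :=
  (Finsupp.mapDomain.addMonoidHom f).map_sub x y

theorem barD2_comm :
    (barD2 k H).comp (barC2Map k f) = (barC1Map k f).comp (barD2 k G) := by
  apply Finsupp.lhom_ext
  intro a b
  simp only [LinearMap.comp_apply, barC2Map, barC1Map, lmapDomain_apply,
    mapDomain_single, barD2, Finsupp.lift_apply, sum_single_index, one_smul,
    zero_smul, smul_sub, smul_add]
  simp [mapDomain_add, mapDomain_sub', mapDomain_single, Prod.map, map_mul]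

theorem barD3_comm :
    (barD3 k H).comp (barC3Map k f) = (barC2Map k f).comp (barD3 k G) := by
  apply Finsupp.lhom_ext
  intro a b
  simp only [LinearMap.comp_apply, barC3Map, barC2Map, lmapDomain_apply,
    mapDomain_single, barD3, Finsupp.lift_apply, sum_single_index, one_smul,
    zero_smul, smul_sub, smul_add]
  simp [mapDomain_add, mapDomain_sub', mapDomain_single, Prod.map, map_mul]

theorem barC2Map_ker (x : (G × G) →₀ k) (hx : x ∈ (barD2 k G).toAddMonoidHom.ker) :
    barC2Map k f x ∈ (barD2 k H).toAddMonoidHom.ker := by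
  rw [AddMonoidHom.mem_ker, LinearMap.toAddMonoidHom_coe] at hx ⊢
  have := congrFun (congrArg DFunLike.coe (barD2_comm k f)) x
  simp only [LinearMap.comp_apply] at this
  rw [this, hx, map_zero]

/-- The homomorphism `H₂(G; k) → H₂(H; k)` induced by a group homomorphism
`f : G → H`. -/
noncomputable def groupH2Map : groupH2 k G →+ groupH2 k H := by
  refine QuotientAddGroup.map _ _
    ((((barC2Map k f).toAddMonoidHom.domRestrict
        (barD2 k G).toAddMonoidHom.ker).codRestrict
      (barD2 k H).toAddMonoidHom.ker
      (fun x => barC2Map_ker k f x.1 x.2)) : _ →+ _) ?_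
  rintro ⟨x, hx⟩ hmem
  simp only [AddSubgroup.mem_comap, AddSubgroup.coe_subtype,
    AddMonoidHom.mem_range] at hmem ⊢
  obtain ⟨y, hy⟩ := hmem
  refine ⟨barC3Map k f y, ?_⟩
  have h3 := congrFun (congrArg DFunLike.coe (barD3_comm k f)) y
  simp only [LinearMap.comp_apply] at h3
  simp only [LinearMap.toAddMonoidHom_coe, AddSubgroup.coe_subtype] at hy
  simp only [AddMonoidHom.codRestrict_apply, AddMonoidHom.domRestrict_apply,
    LinearMap.toAddMonoidHom_coe, AddSubgroup.coe_subtype]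
  rw [h3, hy]
  rfl

end maps

section cyclic

variable {G : Type*} [Group G] {g h : G}

theorem Commute.exists_mem_zpowers_of_zpow_eq_zpow_of_gcd_eq_one (hc : Commute g h) {m n : ℤ}
    (hmn : g ^ m = h ^ n) (hcop : Int.gcd m n = 1) :
    ∃ c : G, g ∈ Subgroup.zpowers c ∧ h ∈ Subgroup.zpowers c := by
  obtain ⟨u, v, huv⟩ : ∃ u v : ℤ, m * u + n * v = 1 :=
    ⟨Int.gcdA m n, Int.gcdB m n, by rw [← Int.gcd_eq_gcd_ab, hcop, Nat.cast_one]⟩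
  refine ⟨g ^ v * h ^ u, Subgroup.mem_zpowers_iff.2 ⟨n, ?_⟩, Subgroup.mem_zpowers_iff.2 ⟨m, ?_⟩⟩
  · rw [(hc.zpow_zpow v u).mul_zpow, ← zpow_mul, ← zpow_mul, mul_comm u n, zpow_mul h n,
      ← hmn, ← zpow_mul, ← zpow_add, show v * n + m * u = 1 by linarith, zpow_one]
  · rw [(hc.zpow_zpow v u).mul_zpow, ← zpow_mul, ← zpow_mul, mul_comm v m, zpow_mul g m,
      hmn, ← zpow_mul, ← zpow_add, show n * v + u * m = 1 by linarith, zpow_one]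

theorem Commute.exists_mem_zpowers_of_zpow_eq_zpow
    (htf : ∀ x : G, x ≠ 1 → ¬IsOfFinOrder x) (hc : Commute g h) {m n : ℤ}
    (hmn : g ^ m = h ^ n) (hne : m ≠ 0 ∨ n ≠ 0) :
    ∃ c : G, g ∈ Subgroup.zpowers c ∧ h ∈ Subgroup.zpowers c := by
  have hd : 0 < Int.gcd m n := Int.gcd_pos_iff.2 hne
  obtain ⟨m', hm⟩ := Int.gcd_dvd_left (a := m) (b := n)
  obtain ⟨n', hn⟩ := Int.gcd_dvd_right (a := m) (b := n)
  refine hc.exists_mem_zpowers_of_zpow_eq_zpow_of_gcd_eq_one (m := m') (n := n') ?_ ?_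
  · have hpow : (g ^ m' * (h ^ n')⁻¹) ^ (Int.gcd m n : ℤ) = 1 := by
      rw [(hc.zpow_zpow m' n').inv_right.mul_zpow, inv_zpow, ← zpow_mul, ← zpow_mul,
        mul_comm, ← hm, mul_comm, ← hn, hmn, mul_inv_cancel]
    by_contra hne'
    exact htf _ (mul_inv_eq_one.not.2 hne')
      (isOfFinOrder_iff_zpow_eq_one.2 ⟨_, Int.natCast_ne_zero.2 hd.ne', hpow⟩)
  · have hgcd := Int.gcd_mul_left (Int.gcd m n) m' n'
    rw [← hm, ← hn, Int.natAbs_natCast] at hgcd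
    exact (Nat.mul_eq_left hd.ne').1 hgcd.symm

theorem Commute.exists_zpow_eq_zpow_of_forall_isEmpty_mulEquiv
    (hG : ∀ K : Subgroup G, ¬Nonempty (K ≃* Multiplicative (ℤ × ℤ))) (hc : Commute g h) :
    ∃ m n : ℤ, (m ≠ 0 ∨ n ≠ 0) ∧ g ^ m = h ^ n := by
  let ψ : Multiplicative (ℤ × ℤ) →* G :=
    ((zpowersHom G g).noncommCoprod (zpowersHom G h) fun _ _ => hc.zpow_zpow _ _).comp
      (MulEquiv.prodMultiplicative (G := ℤ) (H := ℤ)).toMonoidHom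
  have hψ : ¬Function.Injective ψ := fun hinj =>
    hG ψ.range ⟨(MonoidHom.ofInjective hinj).symm⟩
  rw [injective_iff_map_eq_one] at hψ
  push Not at hψ
  obtain ⟨a, ha, hne⟩ := hψ
  refine ⟨a.toAdd.1, -a.toAdd.2, ?_, ?_⟩
  · by_contra! h0
    exact hne (Prod.ext h0.1 (neg_eq_zero.1 h0.2))
  · rw [zpow_neg, eq_inv_iff_mul_eq_one]
    exact ha

end cyclic

section wedgeClass

variable {k : Type} [Ring k] {G : Type} [Group G]

theorem barD3_single (t : G × G × G) :
    barD3 k G (single t 1) =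
      single (t.2.1, t.2.2) 1 - single (t.1 * t.2.1, t.2.2) 1
        + single (t.1, t.2.1 * t.2.2) 1 - single (t.1, t.2.1) 1 := by
  simp [barD3]

theorem wedgeClass_swap {g h : G} (hc : g * h = h * g) :
    wedgeClass k h g hc.symm = -wedgeClass k g h hc := by
  unfold wedgeClass
  rw [← QuotientAddGroup.mk_neg]
  congr 1
  ext1
  simp

theorem wedgeClass_self (g : G) : wedgeClass k g g rfl = 0 := by
  unfold wedgeClass
  rw [← QuotientAddGroup.mk_zero]
  congr 1
  ext1
  simp

theorem wedgeClass_mul_right {g x y : G} (hx : Commute g x) (hy : Commute g y) :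
    wedgeClass k g (x * y) (hx.mul_right hy) = wedgeClass k g x hx + wedgeClass k g y hy := by
  unfold wedgeClass
  rw [← QuotientAddGroup.mk_add, QuotientAddGroup.eq, AddSubgroup.mem_comap,
    AddMonoidHom.mem_range]
  refine ⟨single (x, g, y) 1 - single (g, x, y) 1 - single (x, y, g) 1, ?_⟩
  simp only [LinearMap.toAddMonoidHom_coe, map_sub, barD3_single, AddSubgroup.coe_subtype,
    AddSubgroup.coe_add, AddSubgroup.coe_neg]
  rw [hx.eq, ← hy.eq]
  abel

theorem wedgeClass_zpow_right {g c : G} (hgc : Commute g c) (n : ℤ) :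
    wedgeClass k g (c ^ n) (hgc.zpow_right n) = n • wedgeClass k g c hgc := by
  let φ : ℤ →+ groupH2 k G :=
    AddMonoidHom.mk' (fun n => wedgeClass k g (c ^ n) (hgc.zpow_right n)) fun a b => by
      simp only [zpow_add]
      exact wedgeClass_mul_right _ _
  simpa only [φ, AddMonoidHom.mk'_apply, smul_eq_mul, mul_one, zpow_one] using φ.map_zsmul n 1

theorem wedgeClass_zpow_zpow (c : G) (i j : ℤ) (hc : c ^ i * c ^ j = c ^ j * c ^ i) :
    wedgeClass k (c ^ i) (c ^ j) hc = 0 := by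
  rw [wedgeClass_zpow_right ((Commute.refl c).zpow_left i),
    wedgeClass_swap ((Commute.refl c).zpow_right i), wedgeClass_zpow_right (Commute.refl c),
    wedgeClass_self, smul_zero, neg_zero, smul_zero]

end wedgeClass

/-- If `G` is torsion-free with no subgroup isomorphic to `ℤ × ℤ`, the
Pontryagin product `g ∧ h` of any commuting `g, h` vanishes in `H₂(G; ℤ)`. -/
theorem stmt11 (G : Type) [Group G] (htf : ∀ g : G, g ≠ 1 → ¬ IsOfFinOrder g)
    (hG : ∀ K : Subgroup G, ¬ Nonempty (K ≃* Multiplicative (ℤ × ℤ)))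
    (g h : G) (hc : g * h = h * g) : wedgeClass ℤ g h hc = 0 := by
  obtain ⟨m, n, hne, hmn⟩ := Commute.exists_zpow_eq_zpow_of_forall_isEmpty_mulEquiv hG hc
  obtain ⟨c, ⟨i, rfl⟩, ⟨j, rfl⟩⟩ := Commute.exists_mem_zpowers_of_zpow_eq_zpow htf hc hmn hne
  exact wedgeClass_zpow_zpow c i j hc
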